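/- arXiv:1009.5513 — 3 statements merged into one kernel-verified Lean document; each statement's English description precedes it below -/
import Mathlib

section
/- Let φ be a mean-zero complex Gaussian field on a bounded domain Λ whose covariance operator T_C on L²(Λ) is trace class, with largest eigenvalue κ₁ of multiplicity g₁ and second largest distinct eigenvalue κ₂ < κ₁. Write φ = φ_∥ + φ_⊥, where φ_∥ is the projection onto the κ₁-eigenspace. Then for every r > 0 and every ε > 0, P( ‖φ_⊥‖₂ > ε √r and ‖φ‖₂² > r ) ≤ P(‖φ‖₂² > r) · ∫_{ε² r}^{∞} e^{u/κ₁} dP_⊥(u), where P_⊥ is the law of ‖φ_⊥‖₂². -/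
open MeasureTheory ProbabilityTheory Real Filter Topology

section Auxiliary

open ENNReal NNReal Set in
private lemma measurable_tsum_of_nonneg' {Ω : Type*} {m : MeasurableSpace Ω} (f : ℕ → Ω → ℝ)
    (hf : ∀ n, Measurable (f n)) (h0 : ∀ n ω, 0 ≤ f n ω) :
    Measurable (fun ω => ∑' n, f n ω) := by
  have key : ∀ ω, (∑' n, f n ω) = (∑' n, ENNReal.ofReal (f n ω)).toReal := by
    intro ω
    by_cases h : Summable (fun n => f n ω)
    · rw [← ENNReal.ofReal_tsum_of_nonneg (fun n => h0 n ω) h,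
        ENNReal.toReal_ofReal (tsum_nonneg (fun n => h0 n ω))]
    · rw [tsum_eq_zero_of_not_summable h]
      have : (∑' n, ENNReal.ofReal (f n ω)) = ⊤ := by
        by_contra hne
        refine h ?_
        have := ENNReal.summable_toReal hne
        simpa [ENNReal.toReal_ofReal (h0 _ ω)] using this
      simp [this]
  have : (fun ω => ∑' n, f n ω) = fun ω => (∑' n, ENNReal.ofReal (f n ω)).toReal := funext key
  rw [this]
  exact (Measurable.ennreal_tsum (fun n => (hf n).ennreal_ofReal)).ennreal_toReal

end Auxiliary

/-- The standard complex Gaussian measure on `ℂ`. -/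
noncomputable def stdCplxGaussian : Measure ℂ :=
  ((gaussianReal 0 (1/2)).prod (gaussianReal 0 (1/2))).map fun p => ⟨p.1, p.2⟩

section StdCplx

open ENNReal NNReal Set

private lemma gaussian_prod_eq' :
    ((gaussianReal 0 (1/2)).prod (gaussianReal 0 (1/2))) =
      (volume.prod volume).withDensity
        (fun p => gaussianPDF 0 (1/2) p.1 * gaussianPDF 0 (1/2) p.2) := by
  have h2 : ((1:ℝ≥0)/2) ≠ 0 := by norm_num
  refine Measure.prod_eq fun s t hs ht => ?_
  rw [withDensity_apply _ (hs.prod ht), gaussianReal_apply _ h2, gaussianReal_apply _ h2,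
    ← Measure.prod_restrict,
    lintegral_prod_mul (f := gaussianPDF 0 (1/2)) (g := gaussianPDF 0 (1/2))
      (measurable_gaussianPDF _ _).aemeasurable (measurable_gaussianPDF _ _).aemeasurable]

private lemma stdCplxGaussian_norm_sq_gt (t : ℝ) :
    stdCplxGaussian {z : ℂ | t < ‖z‖^2} = ENNReal.ofReal (Real.exp (-(max t 0))) := by
  have hmkc : Continuous (fun p : ℝ × ℝ => (⟨p.1, p.2⟩ : ℂ)) := by
    have h : (fun p : ℝ × ℝ => (⟨p.1, p.2⟩ : ℂ))
        = fun p : ℝ × ℝ => (p.1 : ℂ) + (p.2 : ℂ) * Complex.I := by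
      funext p; exact Complex.mk_eq_add_mul_I p.1 p.2
    rw [h]
    exact (Complex.continuous_ofReal.comp continuous_fst).add
      ((Complex.continuous_ofReal.comp continuous_snd).mul continuous_const)
  have hsetm : MeasurableSet {z : ℂ | t < ‖z‖^2} :=
    measurableSet_lt measurable_const (measurable_norm.pow_const 2)
  rcases lt_or_ge t 0 with h0 | h0
  · have huniv : {z : ℂ | t < ‖z‖^2} = Set.univ :=
      Set.eq_univ_of_forall fun z => lt_of_lt_of_le h0 (by positivity)
    have : IsProbabilityMeasure stdCplxGaussian := by
      unfold stdCplxGaussian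
      exact Measure.isProbabilityMeasure_map hmkc.measurable.aemeasurable
    rw [huniv, measure_univ, max_eq_right h0.le]
    simp
  · rw [max_eq_left h0, stdCplxGaussian, Measure.map_apply hmkc.measurable hsetm]
    have hpre : (fun p : ℝ × ℝ => (⟨p.1, p.2⟩ : ℂ)) ⁻¹' {z : ℂ | t < ‖z‖^2}
        = {p : ℝ × ℝ | t < p.1^2 + p.2^2} := by
      ext p
      simp only [Set.mem_preimage, Set.mem_setOf_eq, Complex.sq_norm,
        Complex.normSq_mk]
      ring_nf
    have hB : MeasurableSet {p : ℝ × ℝ | t < p.1^2 + p.2^2} :=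
      measurableSet_lt measurable_const
        ((measurable_fst.pow_const 2).add (measurable_snd.pow_const 2))
    rw [hpre, gaussian_prod_eq', withDensity_apply _ hB]
    set gR : ℝ → ℝ := gaussianPDFReal 0 (1/2) with hgR
    have hprod_eq : ∀ p : ℝ × ℝ, gaussianPDF 0 (1/2) p.1 * gaussianPDF 0 (1/2) p.2
        = ENNReal.ofReal (gR p.1 * gR p.2) := by
      intro p
      rw [gaussianPDF, gaussianPDF, ← ENNReal.ofReal_mul (gaussianPDFReal_nonneg _ _ _)]
    simp_rw [hprod_eq]
    have hint : Integrable (fun p : ℝ × ℝ => gR p.1 * gR p.2) (volume.prod volume) :=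
      Integrable.mul_prod (integrable_gaussianPDFReal 0 (1/2)) (integrable_gaussianPDFReal 0 (1/2))
    rw [← ofReal_integral_eq_lintegral_ofReal hint.restrict
      (Filter.Eventually.of_forall fun p =>
        mul_nonneg (gaussianPDFReal_nonneg _ _ _) (gaussianPDFReal_nonneg _ _ _))]
    congr 1
    rw [← Measure.volume_eq_prod, ← integral_indicator hB, ← integral_comp_polarCoord_symm]
    have hval : ∀ p ∈ polarCoord.target,
        p.1 • Set.indicator {p : ℝ × ℝ | t < p.1^2 + p.2^2}
            (fun p => gR p.1 * gR p.2) (polarCoord.symm p)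
        = (Set.indicator (Set.Ioi (Real.sqrt t))
            (fun x => x * (π⁻¹ * Real.exp (-x^2))) p.1) * (fun _ : ℝ => (1:ℝ)) p.2 := by
      rintro ⟨ρ, θ⟩ ⟨hρ, hθ⟩
      simp only [Set.mem_Ioi] at hρ
      have hsymm : polarCoord.symm (ρ, θ) = (ρ * Real.cos θ, ρ * Real.sin θ) := by
        simp [polarCoord]
      have hnormsq : (ρ * Real.cos θ)^2 + (ρ * Real.sin θ)^2 = ρ^2 := by
        nlinarith [Real.sin_sq_add_cos_sq θ]
      have hgRval : ∀ x : ℝ, gR x = (Real.sqrt π)⁻¹ * Real.exp (-x^2) := by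
        intro x
        rw [hgR, gaussianPDFReal]
        push_cast
        norm_num
        rw [mul_comm ((Real.sqrt π)⁻¹) ((Real.sqrt 2)⁻¹), ← mul_assoc,
          mul_inv_cancel₀ (by positivity : Real.sqrt 2 ≠ 0), one_mul]
      have hprodval : gR (ρ * Real.cos θ) * gR (ρ * Real.sin θ) = π⁻¹ * Real.exp (-ρ^2) := by
        rw [hgRval, hgRval, ← hnormsq]
        rw [show ((Real.sqrt π)⁻¹ * Real.exp (-(ρ * Real.cos θ)^2)) *
            ((Real.sqrt π)⁻¹ * Real.exp (-(ρ * Real.sin θ)^2))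
            = ((Real.sqrt π)⁻¹ * (Real.sqrt π)⁻¹) *
              (Real.exp (-(ρ * Real.cos θ)^2) * Real.exp (-(ρ * Real.sin θ)^2)) by ring]
        rw [← Real.exp_add, ← mul_inv, Real.mul_self_sqrt Real.pi_pos.le]
        ring_nf
      rw [hsymm]
      by_cases hmem : t < ρ^2
      · rw [Set.indicator_of_mem, Set.indicator_of_mem]
        · simp only [smul_eq_mul]
          rw [hprodval]; ring
        · exact Set.mem_Ioi.mpr ((Real.sqrt_lt' hρ).mpr hmem)
        · simpa [Set.mem_setOf_eq, hnormsq] using hmem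
      · rw [Set.indicator_of_notMem, Set.indicator_of_notMem]
        · simp
        · exact fun hc => hmem ((Real.sqrt_lt' hρ).mp (Set.mem_Ioi.mp hc))
        · simpa [Set.mem_setOf_eq, hnormsq] using hmem
    rw [setIntegral_congr_fun polarCoord.open_target.measurableSet hval]
    rw [show polarCoord.target = Set.Ioi (0:ℝ) ×ˢ Set.Ioo (-π) π from rfl,
      Measure.volume_eq_prod, ← Measure.prod_restrict,
      integral_prod_mul (fun x : ℝ => (Set.Ioi (Real.sqrt t)).indicator
        (fun x => x * (π⁻¹ * Real.exp (-x^2))) x) (fun _ : ℝ => (1:ℝ))]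
    rw [setIntegral_indicator measurableSet_Ioi]
    have hIoi : Set.Ioi (0:ℝ) ∩ Set.Ioi (Real.sqrt t) = Set.Ioi (Real.sqrt t) := by
      rw [Set.Ioi_inter_Ioi, max_eq_right (Real.sqrt_nonneg t)]
    rw [hIoi]
    have hconst : (∫ _ in Set.Ioo (-π) π, (1:ℝ)) = 2 * π := by
      simp [Real.volume_Ioo]
      rw [max_eq_left (by positivity)]
      ring
    have hrad : (∫ x in Set.Ioi (Real.sqrt t), x * (π⁻¹ * Real.exp (-x^2)))
        = π⁻¹ * Real.exp (-t) / 2 := by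
      have hderiv : ∀ x ∈ Set.Ioi (Real.sqrt t),
          HasDerivAt (fun x => -(π⁻¹ * Real.exp (-x^2) / 2))
            (x * (π⁻¹ * Real.exp (-x^2))) x := by
        intro x _
        have h1 : HasDerivAt (fun x : ℝ => -x^2) (-(2*x)) x := by
          simpa using (hasDerivAt_pow 2 x).fun_neg
        have h2 := (h1.exp.const_mul π⁻¹).div_const 2 |>.fun_neg
        refine h2.congr_deriv ?_
        ring
      have htend : Filter.Tendsto (fun x : ℝ => -(π⁻¹ * Real.exp (-x^2) / 2))
          Filter.atTop (nhds 0) := by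
        have h1 : Filter.Tendsto (fun x : ℝ => Real.exp (-x^2)) Filter.atTop (nhds 0) := by
          have h2 : Filter.Tendsto (fun x : ℝ => -x^2) Filter.atTop Filter.atBot :=
            tendsto_neg_atBot_iff.mpr (tendsto_pow_atTop two_ne_zero)
          exact Real.tendsto_exp_atBot.comp h2
        have := ((h1.const_mul π⁻¹).div_const 2).neg
        simpa using this
      have := integral_Ioi_of_hasDerivAt_of_nonneg
        (Continuous.continuousWithinAt (by continuity)) hderiv
        (fun x hx => by
          have hx0 : 0 < x := lt_of_le_of_lt (Real.sqrt_nonneg t) hx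
          positivity)
        htend
      rw [this, Real.sq_sqrt h0]
      ring
    rw [hrad, hconst]
    have hπ : (π:ℝ) ≠ 0 := Real.pi_ne_zero
    field_simp

private lemma lintegral_norm_sq_stdCplxGaussian :
    ∫⁻ z, ENNReal.ofReal (‖z‖^2) ∂stdCplxGaussian = 1 := by
  rw [lintegral_eq_lintegral_meas_lt _ (Filter.Eventually.of_forall fun z => by positivity)
    (measurable_norm.pow_const 2).aemeasurable]
  rw [setLIntegral_congr_fun measurableSet_Ioi (fun u hu => by
    rw [stdCplxGaussian_norm_sq_gt, max_eq_left (le_of_lt hu)])]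
  rw [← ofReal_integral_eq_lintegral_ofReal
    (by simpa [IntegrableOn] using exp_neg_integrableOn_Ioi 0 one_pos)
    (ae_of_all _ fun u => (Real.exp_pos _).le)]
  rw [integral_exp_neg_Ioi_zero]
  simp

end StdCplx

/-- For a mean-zero complex Gaussian field with trace-class covariance, given through its
Karhunen–Loève expansion (eigenvalues `μ_n`, equal to the top eigenvalue `κ₁` with
multiplicity `g₁`, and at most `κ₂ < κ₁` beyond), with `‖φ‖₂² = Σ μ_n|s_n|²` and
`‖φ_⊥‖₂² = Σ_{n≥g₁} μ_n|s_n|²`: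
`P(‖φ_⊥‖₂ > ε√r ∧ ‖φ‖₂² > r) ≤ P(‖φ‖₂² > r) · ∫_{ε²r}^∞ e^{u/κ₁} dP_⊥(u)`. -/
theorem concentration_key_estimate
    {Ω : Type*} [MeasurableSpace Ω] (P : Measure Ω) [IsProbabilityMeasure P]
    (s : ℕ → Ω → ℂ) (hmeas : ∀ n, Measurable (s n))
    (hindep : iIndepFun s P)
    (hdist : ∀ n, P.map (s n) = stdCplxGaussian)
    (μ : ℕ → ℝ) (κ₁ κ₂ : ℝ) (g₁ : ℕ) (hg₁ : 1 ≤ g₁)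
    (hκ₂ : 0 < κ₂) (hgap : κ₂ < κ₁)
    (htop : ∀ n < g₁, μ n = κ₁) (htail : ∀ n, g₁ ≤ n → μ n ≤ κ₂)
    (hpos : ∀ n, 0 ≤ μ n) (hsum : Summable μ)
    (N Nperp : Ω → ℝ)
    (hN : ∀ ω, N ω = ∑' n, μ n * ‖s n ω‖ ^ 2)
    (hNperp : ∀ ω, Nperp ω = ∑' n, μ (n + g₁) * ‖s (n + g₁) ω‖ ^ 2)
    (r ε : ℝ) (hr : 0 < r) (hε : 0 < ε) :
    P {ω | Real.sqrt (Nperp ω) > ε * Real.sqrt r ∧ N ω > r} ≤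
      P {ω | N ω > r} *
        ∫⁻ u in Set.Ioi (ε ^ 2 * r), ENNReal.ofReal (Real.exp (u / κ₁)) ∂(P.map Nperp) := by
  classical
  have hκ₁ : 0 < κ₁ := hκ₂.trans hgap
  set f : ℕ → Ω → ℝ := fun n ω => μ n * ‖s n ω‖^2 with hfdef
  have hfmeas : ∀ n, Measurable (f n) :=
    fun n => measurable_const.mul ((hmeas n).norm.pow_const 2)
  have hfnn : ∀ n ω, 0 ≤ f n ω := fun n ω => mul_nonneg (hpos n) (by positivity)
  have hNmeas : Measurable N := by
    have h : N = fun ω => ∑' n, f n ω := funext hN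
    rw [h]; exact measurable_tsum_of_nonneg' f hfmeas hfnn
  have hNperpeq : Nperp = fun ω => ∑' n, f (n + g₁) ω := funext hNperp
  have hNperpmeas : Measurable Nperp := by
    rw [hNperpeq]
    exact measurable_tsum_of_nonneg' _ (fun n => hfmeas (n + g₁)) (fun n ω => hfnn _ ω)
  have hNperpnn : ∀ ω, 0 ≤ Nperp ω := fun ω =>
    (hNperp ω) ▸ tsum_nonneg (fun n => hfnn _ ω)
  set E : Ω → ℝ := fun ω => ‖s 0 ω‖^2 with hEdef
  set X : Ω → ℝ := fun ω => ∑ n ∈ Finset.range (g₁ - 1), f (n+1) ω with hXdef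
  have hEmeas : Measurable E := (hmeas 0).norm.pow_const 2
  have hXmeas : Measurable X := Finset.measurable_sum _ (fun n _ => hfmeas (n+1))
  have hXnn : ∀ ω, 0 ≤ X ω := fun ω => Finset.sum_nonneg (fun n _ => hfnn _ ω)
  -- a.e. summability
  have hsumae : ∀ᵐ ω ∂P, Summable fun n => f n ω := by
    have hone : ∀ n, ∫⁻ ω, ENNReal.ofReal (f n ω) ∂P = ENNReal.ofReal (μ n) := by
      intro n
      have h2 : ∀ ω, ENNReal.ofReal (f n ω)
          = ENNReal.ofReal (μ n) * ENNReal.ofReal (‖s n ω‖^2) := by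
        intro ω; rw [hfdef, ← ENNReal.ofReal_mul (hpos n)]
      simp_rw [h2]
      rw [lintegral_const_mul _ (((hmeas n).norm.pow_const 2).ennreal_ofReal)]
      have h3 : ∫⁻ ω, ENNReal.ofReal (‖s n ω‖^2) ∂P
          = ∫⁻ z, ENNReal.ofReal (‖z‖^2) ∂(P.map (s n)) := by
        rw [lintegral_map (measurable_norm.pow_const 2).ennreal_ofReal (hmeas n)]
      rw [h3, hdist n, lintegral_norm_sq_stdCplxGaussian, mul_one]
    have hlint : ∫⁻ ω, ∑' n, ENNReal.ofReal (f n ω) ∂P ≠ ⊤ := by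
      rw [lintegral_tsum (fun n => ((hfmeas n).ennreal_ofReal).aemeasurable)]
      simp_rw [hone]
      rw [← ENNReal.ofReal_tsum_of_nonneg hpos hsum]
      exact ENNReal.ofReal_ne_top
    have hae := ae_lt_top (Measurable.ennreal_tsum (fun n => (hfmeas n).ennreal_ofReal)) hlint
    filter_upwards [hae] with ω hω
    have := ENNReal.summable_toReal hω.ne
    simpa [ENNReal.toReal_ofReal (hfnn _ ω)] using this
  -- a.e. decomposition
  have hdecomp : ∀ᵐ ω ∂P, N ω = κ₁ * E ω + X ω + Nperp ω := by
    filter_upwards [hsumae] with ω hsummable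
    have h1 := Summable.sum_add_tsum_nat_add (k := g₁) hsummable
    have h2 : ∑ n ∈ Finset.range g₁, f n ω = κ₁ * E ω + X ω := by
      have h3 : g₁ = (g₁ - 1) + 1 := (Nat.succ_pred_eq_of_pos hg₁).symm
      rw [h3, Finset.sum_range_succ']
      have h4 : f 0 ω = κ₁ * E ω := by
        simp only [hfdef]
        rw [htop 0 hg₁]
      rw [h4, hXdef, add_comm]
    rw [hN ω, ← h1, h2, hNperp ω]
  -- independence
  have hindep' : iIndep (fun i => MeasurableSpace.comap (s i) inferInstance) P := hindep
  have hmeas_sup : ∀ (S : Set ℕ), ∀ i ∈ S,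
      Measurable[⨆ j ∈ S, MeasurableSpace.comap (s j) inferInstance] (s i) := fun S i hi =>
    measurable_iff_comap_le.mpr
      (le_iSup₂ (f := fun j (_ : j ∈ S) => MeasurableSpace.comap (s j) inferInstance) i hi)
  have hfmeas_sup : ∀ (S : Set ℕ), ∀ i ∈ S,
      Measurable[⨆ j ∈ S, MeasurableSpace.comap (s j) inferInstance] (f i) := by
    intro S i hi
    have hg : Measurable (fun z : ℂ => μ i * ‖z‖^2) :=
      measurable_const.mul (measurable_norm.pow_const 2)
    exact hg.comp (hmeas_sup S i hi)
  have hXmeas_sup : ∀ (S : Set ℕ), (∀ n, n < g₁ - 1 → (n+1) ∈ S) →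
      Measurable[⨆ j ∈ S, MeasurableSpace.comap (s j) inferInstance] X := by
    intro S hS
    rw [hXdef]
    exact Finset.measurable_sum _ (fun n hn => hfmeas_sup S (n+1) (hS n (Finset.mem_range.mp hn)))
  have hNperpmeas_sup : ∀ (S : Set ℕ), (∀ n, (n + g₁) ∈ S) →
      Measurable[⨆ j ∈ S, MeasurableSpace.comap (s j) inferInstance] Nperp := by
    intro S hS
    rw [hNperpeq]
    exact measurable_tsum_of_nonneg' _ (fun n => hfmeas_sup S (n + g₁) (hS n))
      (fun n ω => hfnn _ ω)
  have hEW : IndepFun E (fun ω => (X ω, Nperp ω)) P := by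
    have hdisj : Disjoint ({0} : Set ℕ) {i : ℕ | 1 ≤ i} := by
      rw [Set.disjoint_left]; rintro a rfl; simp
    have h := indep_iSup_of_disjoint (fun i => (hmeas i).comap_le) hindep' hdisj
    refine indep_of_indep_of_le_left (indep_of_indep_of_le_right h ?_) ?_
    · refine measurable_iff_comap_le.mp ?_
      refine Measurable.prodMk ?_ ?_
      · exact hXmeas_sup _ (fun n hn => by simp only [Set.mem_setOf_eq]; omega)
      · exact hNperpmeas_sup _ (fun n => by simp only [Set.mem_setOf_eq]; omega)
    · refine measurable_iff_comap_le.mp ?_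
      have hg : Measurable (fun z : ℂ => ‖z‖^2) := measurable_norm.pow_const 2
      exact hg.comp (hmeas_sup {0} 0 rfl)
  have hXperp : IndepFun X Nperp P := by
    have hdisj : Disjoint {i : ℕ | 1 ≤ i ∧ i < g₁} {i : ℕ | g₁ ≤ i} := by
      rw [Set.disjoint_left]; intro a ha hb; simp only [Set.mem_setOf_eq] at ha hb; omega
    have h := indep_iSup_of_disjoint (fun i => (hmeas i).comap_le) hindep' hdisj
    refine indep_of_indep_of_le_left (indep_of_indep_of_le_right h ?_) ?_
    · exact measurable_iff_comap_le.mp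
        (hNperpmeas_sup _ (fun n => by simp only [Set.mem_setOf_eq]; omega))
    · exact measurable_iff_comap_le.mp
        (hXmeas_sup _ (fun n hn => by simp only [Set.mem_setOf_eq]; omega))
  have hEX : IndepFun E X P := hEW.comp measurable_id measurable_fst
  -- laws
  have hlawE : ∀ c : ℝ, P.map E (Set.Ioi c) = ENNReal.ofReal (Real.exp (-(max c 0))) := by
    intro c
    have h1 : P.map E = stdCplxGaussian.map (fun z : ℂ => ‖z‖^2) := by
      rw [← hdist 0, Measure.map_map (measurable_norm.pow_const 2) (hmeas 0)]
      rfl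
    rw [h1, Measure.map_apply (measurable_norm.pow_const 2) measurableSet_Ioi]
    exact stdCplxGaussian_norm_sq_gt c
  have hlawEκ : ∀ c : ℝ, P.map E {e : ℝ | c < κ₁ * e}
      = ENNReal.ofReal (Real.exp (-(max (c/κ₁) 0))) := by
    intro c
    have h1 : {e : ℝ | c < κ₁ * e} = Set.Ioi (c/κ₁) := by
      ext e
      simp only [Set.mem_setOf_eq, Set.mem_Ioi]
      rw [div_lt_iff₀ hκ₁, mul_comm]
    rw [h1, hlawE]
  -- event rewriting
  have hev1 : {ω | Real.sqrt (Nperp ω) > ε * Real.sqrt r ∧ N ω > r}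
      = {ω | ε^2*r < Nperp ω ∧ r < N ω} := by
    ext ω
    simp only [Set.mem_setOf_eq, gt_iff_lt]
    constructor
    · rintro ⟨h1, h2⟩
      refine ⟨?_, h2⟩
      have h3 : Real.sqrt (ε^2*r) < Real.sqrt (Nperp ω) := by
        rwa [Real.sqrt_mul (sq_nonneg ε), Real.sqrt_sq hε.le]
      exact (Real.sqrt_lt_sqrt_iff (by positivity)).mp h3
    · rintro ⟨h1, h2⟩
      refine ⟨?_, h2⟩
      have h3 : Real.sqrt (ε^2*r) < Real.sqrt (Nperp ω) :=
        Real.sqrt_lt_sqrt (by positivity) h1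
      rwa [Real.sqrt_mul (sq_nonneg ε), Real.sqrt_sq hε.le] at h3
  have hstep2 : P {ω | ε^2*r < Nperp ω ∧ r < N ω}
      ≤ P {ω | ε^2*r < Nperp ω ∧ r < κ₁ * E ω + X ω + Nperp ω} := by
    refine measure_mono_ae ?_
    filter_upwards [hdecomp] with ω hω
    rintro ⟨h1, h2⟩
    exact ⟨h1, by rw [← hω]; exact h2⟩
  -- joint laws
  have hWmeas : Measurable (fun ω => (X ω, Nperp ω)) := hXmeas.prodMk hNperpmeas
  have hmapEW : P.map (fun ω => (E ω, (X ω, Nperp ω)))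
      = (P.map E).prod (P.map (fun ω => (X ω, Nperp ω))) :=
    (indepFun_iff_map_prod_eq_prod_map_map hEmeas.aemeasurable hWmeas.aemeasurable).mp hEW
  have hmapW : P.map (fun ω => (X ω, Nperp ω)) = (P.map X).prod (P.map Nperp) :=
    (indepFun_iff_map_prod_eq_prod_map_map hXmeas.aemeasurable hNperpmeas.aemeasurable).mp hXperp
  have hmapEX : P.map (fun ω => (E ω, X ω)) = (P.map E).prod (P.map X) :=
    (indepFun_iff_map_prod_eq_prod_map_map hEmeas.aemeasurable hXmeas.aemeasurable).mp hEX
  set B : Set (ℝ × ℝ × ℝ) := {q | ε^2*r < q.2.2 ∧ r < κ₁ * q.1 + q.2.1 + q.2.2} with hBdef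
  have hBm : MeasurableSet B := by
    have h1 : Measurable fun q : ℝ×ℝ×ℝ => q.2.2 := measurable_snd.snd
    have h2 : Measurable fun q : ℝ×ℝ×ℝ => κ₁ * q.1 + q.2.1 + q.2.2 :=
      ((measurable_fst.const_mul κ₁).add measurable_snd.fst).add measurable_snd.snd
    rw [hBdef, Set.setOf_and]
    exact (measurableSet_lt measurable_const h1).inter (measurableSet_lt measurable_const h2)
  have hPev2 : P {ω | ε^2*r < Nperp ω ∧ r < κ₁ * E ω + X ω + Nperp ω}
      = ((P.map E).prod ((P.map X).prod (P.map Nperp))) B := by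
    rw [← hmapW, ← hmapEW,
      Measure.map_apply (hEmeas.prodMk hWmeas) hBm]
    rfl
  have hprodapp : ((P.map E).prod ((P.map X).prod (P.map Nperp))) B
      = ∫⁻ w, (P.map E) {e | ε^2*r < w.2 ∧ r < κ₁ * e + w.1 + w.2}
          ∂((P.map X).prod (P.map Nperp)) := by
    rw [Measure.prod_apply_symm hBm]
    rfl
  -- the pointwise bound
  have hbound : ∀ w : ℝ × ℝ, (P.map E) {e | ε^2*r < w.2 ∧ r < κ₁ * e + w.1 + w.2}
      ≤ Set.indicator {w : ℝ × ℝ | ε^2*r < w.2}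
          (fun w => ENNReal.ofReal (Real.exp (-(max ((r - w.1)/κ₁) 0)))
            * ENNReal.ofReal (Real.exp (w.2/κ₁))) w := by
    intro w
    by_cases hw : ε^2*r < w.2
    · rw [Set.indicator_of_mem (show w ∈ {w : ℝ × ℝ | ε^2*r < w.2} from hw)]
      have hset : {e : ℝ | ε^2*r < w.2 ∧ r < κ₁ * e + w.1 + w.2}
          = {e : ℝ | (r - w.1 - w.2) < κ₁ * e} := by
        ext e
        simp only [Set.mem_setOf_eq]
        constructor
        · rintro ⟨_, h⟩; linarith
        · intro h; exact ⟨hw, by linarith⟩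
      rw [hset, hlawEκ]
      rw [← ENNReal.ofReal_mul (by positivity), ← Real.exp_add]
      apply ENNReal.ofReal_le_ofReal
      apply Real.exp_le_exp.mpr
      have hw2 : 0 < w.2 := lt_of_le_of_lt (by positivity) hw
      have h1 : (r - w.1 - w.2)/κ₁ = (r-w.1)/κ₁ - w.2/κ₁ := by ring
      have h2 : 0 < w.2/κ₁ := by positivity
      rw [h1]
      rcases le_or_gt ((r-w.1)/κ₁) 0 with h | h
      · rw [max_eq_right h, max_eq_right (by linarith)]; linarith
      · rw [max_eq_left h.le]
        rcases le_or_gt ((r-w.1)/κ₁ - w.2/κ₁) 0 with h3 | h3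
        · rw [max_eq_right h3]; linarith
        · rw [max_eq_left h3.le]; linarith
    · rw [Set.indicator_of_notMem (show w ∉ {w : ℝ × ℝ | ε^2*r < w.2} from hw)]
      have hset : {e : ℝ | ε^2*r < w.2 ∧ r < κ₁ * e + w.1 + w.2} = ∅ := by
        ext e
        simp only [Set.mem_setOf_eq, Set.mem_empty_iff_false, iff_false]
        rintro ⟨h, _⟩; exact hw h
      rw [hset]
      simp
  have hSvmeas : Measurable fun x : ℝ => ENNReal.ofReal (Real.exp (-(max ((r - x)/κ₁) 0))) :=
    (Real.measurable_exp.comp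
      ((((measurable_const.sub measurable_id).div_const κ₁).max measurable_const).neg)).ennreal_ofReal
  have hExpmeas : Measurable fun u : ℝ => ENNReal.ofReal (Real.exp (u/κ₁)) :=
    (Real.measurable_exp.comp (measurable_id.div_const κ₁)).ennreal_ofReal
  have hle3 : (∫⁻ w, (P.map E) {e | ε^2*r < w.2 ∧ r < κ₁ * e + w.1 + w.2}
          ∂((P.map X).prod (P.map Nperp)))
      ≤ (∫⁻ x, ENNReal.ofReal (Real.exp (-(max ((r - x)/κ₁) 0))) ∂(P.map X)) *
        (∫⁻ u in Set.Ioi (ε^2*r), ENNReal.ofReal (Real.exp (u/κ₁)) ∂(P.map Nperp)) := by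
    refine le_trans (lintegral_mono hbound) ?_
    have hsm : MeasurableSet {w : ℝ × ℝ | ε^2*r < w.2} :=
      measurableSet_lt measurable_const measurable_snd
    rw [lintegral_indicator hsm]
    have hseteq : {w : ℝ × ℝ | ε^2*r < w.2} = Set.univ ×ˢ Set.Ioi (ε^2*r) := by
      ext w
      simp [Set.mem_prod]
    rw [hseteq, ← Measure.prod_restrict, Measure.restrict_univ,
      lintegral_prod_mul hSvmeas.aemeasurable hExpmeas.aemeasurable]
  have hfactor : (∫⁻ x, ENNReal.ofReal (Real.exp (-(max ((r - x)/κ₁) 0))) ∂(P.map X))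
      = P {ω | r < κ₁ * E ω + X ω} := by
    have hB2m : MeasurableSet {q : ℝ × ℝ | r < κ₁ * q.1 + q.2} :=
      measurableSet_lt measurable_const ((measurable_fst.const_mul κ₁).add measurable_snd)
    have h1 : P {ω | r < κ₁ * E ω + X ω}
        = ((P.map E).prod (P.map X)) {q : ℝ × ℝ | r < κ₁ * q.1 + q.2} := by
      rw [← hmapEX, Measure.map_apply (hEmeas.prodMk hXmeas) hB2m]
      rfl
    rw [h1, Measure.prod_apply_symm hB2m]
    refine lintegral_congr fun x => ?_
    have h2 : ((fun e => (e, x)) ⁻¹' {q : ℝ × ℝ | r < κ₁ * q.1 + q.2})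
        = {e : ℝ | (r - x) < κ₁ * e} := by
      ext e
      simp only [Set.mem_preimage, Set.mem_setOf_eq]
      constructor <;> intro h <;> linarith
    rw [h2, hlawEκ]
  have hlast : P {ω | r < κ₁ * E ω + X ω} ≤ P {ω | N ω > r} := by
    refine measure_mono_ae ?_
    filter_upwards [hdecomp] with ω hω h
    have h' : r < κ₁ * E ω + X ω := h
    show r < N ω
    rw [hω]
    have := hNperpnn ω
    linarith
  calc P {ω | Real.sqrt (Nperp ω) > ε * Real.sqrt r ∧ N ω > r}
      = P {ω | ε^2*r < Nperp ω ∧ r < N ω} := by rw [hev1]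
    _ ≤ P {ω | ε^2*r < Nperp ω ∧ r < κ₁ * E ω + X ω + Nperp ω} := hstep2
    _ = ((P.map E).prod ((P.map X).prod (P.map Nperp))) B := hPev2
    _ = ∫⁻ w, (P.map E) {e | ε^2*r < w.2 ∧ r < κ₁ * e + w.1 + w.2}
          ∂((P.map X).prod (P.map Nperp)) := hprodapp
    _ ≤ (∫⁻ x, ENNReal.ofReal (Real.exp (-(max ((r - x)/κ₁) 0))) ∂(P.map X)) *
        (∫⁻ u in Set.Ioi (ε^2*r), ENNReal.ofReal (Real.exp (u/κ₁)) ∂(P.map Nperp)) := hle3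
    _ = P {ω | r < κ₁ * E ω + X ω} *
        (∫⁻ u in Set.Ioi (ε^2*r), ENNReal.ofReal (Real.exp (u/κ₁)) ∂(P.map Nperp)) := by
          rw [hfactor]
    _ ≤ P {ω | N ω > r} *
        (∫⁻ u in Set.Ioi (ε^2*r), ENNReal.ofReal (Real.exp (u/κ₁)) ∂(P.map Nperp)) :=
          mul_le_mul_left hlast _
end

section
/- Let φ be an a.s. continuous mean-zero complex Gaussian field on a bounded domain Λ with Karhunen–Loève expansion φ(x) = Σ_n s_n √μ_n φ_n(x), and suppose the diagonal of the square root of the covariance operator, ⟨x|T_C^{1/2}|x⟩ = Σ_n √μ_n |φ_n(x)|², is bounded on Λ by κ₁^{1/2} B². Let ψ(x) = Σ_n s_n (μ_n/κ₁)^{1/4} φ_n(x). Then almost surely, for every x ∈ Λ, |φ_⊥(x)| ≤ κ₁^{1/4} ‖ψ_⊥‖₂ ⟨x|T_C^{1/2}|x⟩^{1/2}, and consequently ‖φ_⊥‖_∞ ≤ √κ₁ · B · ‖ψ_⊥‖₂. -/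
set_option maxHeartbeats 1000000


open Real

private lemma tsum_cs_summable {a b : ℕ → ℝ} (ha : ∀ n, 0 ≤ a n) (hb : ∀ n, 0 ≤ b n)
    (hA : Summable a) (hB : Summable b) :
    Summable fun n => Real.sqrt (a n) * Real.sqrt (b n) := by
  refine Summable.of_nonneg_of_le (fun n => by positivity) (fun n => ?_)
    ((hA.add hB).div_const 2)
  nlinarith [sq_nonneg (Real.sqrt (a n) - Real.sqrt (b n)),
    Real.sq_sqrt (ha n), Real.sq_sqrt (hb n)]

private lemma tsum_cs {a b : ℕ → ℝ} (ha : ∀ n, 0 ≤ a n) (hb : ∀ n, 0 ≤ b n)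
    (hA : Summable a) (hB : Summable b) :
    (∑' n, Real.sqrt (a n) * Real.sqrt (b n)) ≤
      Real.sqrt (∑' n, a n) * Real.sqrt (∑' n, b n) := by
  refine (tsum_cs_summable ha hb hA hB).tsum_le_of_sum_le (fun t => ?_)
  calc ∑ n ∈ t, Real.sqrt (a n) * Real.sqrt (b n)
      ≤ Real.sqrt (∑ n ∈ t, a n) * Real.sqrt (∑ n ∈ t, b n) :=
        Real.sum_sqrt_mul_sqrt_le t ha hb
    _ ≤ Real.sqrt (∑' n, a n) * Real.sqrt (∑' n, b n) := by
        gcongr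
        · exact hA.sum_le_tsum t (fun n _ => ha n)
        · exact hB.sum_le_tsum t (fun n _ => hb n)

/-- Pointwise Cauchy–Schwarz bound for the orthogonal component of the field:
with `φ_⊥(x) = Σ_{n≥g₁} s_n √μ_n φ_n(x)`, `‖ψ_⊥‖₂² = Σ_{n≥g₁} √(μ_n/κ₁)|s_n|²` and the
diagonal `⟨x|T_C^{1/2}|x⟩ = Σ_n √μ_n |φ_n(x)|²` bounded by `√κ₁ B²`, one has
`|φ_⊥(x)| ≤ κ₁^{1/4} ‖ψ_⊥‖₂ ⟨x|T_C^{1/2}|x⟩^{1/2}` and hence `‖φ_⊥‖_∞ ≤ √κ₁ B ‖ψ_⊥‖₂`. -/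
theorem pointwise_bound_perp_component
    {Λ : Type*} (φfun : ℕ → Λ → ℂ) (s : ℕ → ℂ) (μ : ℕ → ℝ)
    (κ₁ : ℝ) (hκ₁ : 0 < κ₁) (B : ℝ) (hB : 0 ≤ B) (g₁ : ℕ)
    (hpos : ∀ n, 0 ≤ μ n)
    (hψsum : Summable fun n => Real.sqrt (μ (n + g₁) / κ₁) * ‖s (n + g₁)‖ ^ 2)
    (hDsum : ∀ x, Summable fun n => Real.sqrt (μ n) * ‖φfun n x‖ ^ 2)
    (hφsum : ∀ x, Summable fun n => s (n + g₁) * (Real.sqrt (μ (n + g₁)) : ℂ) * φfun (n + g₁) x)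
    (hbound : ∀ x, (∑' n, Real.sqrt (μ n) * ‖φfun n x‖ ^ 2) ≤ Real.sqrt κ₁ * B ^ 2) :
    (∀ x, ‖∑' n, s (n + g₁) * (Real.sqrt (μ (n + g₁)) : ℂ) * φfun (n + g₁) x‖ ≤
        κ₁ ^ ((1 : ℝ) / 4) *
          Real.sqrt (∑' n, Real.sqrt (μ (n + g₁) / κ₁) * ‖s (n + g₁)‖ ^ 2) *
          Real.sqrt (∑' n, Real.sqrt (μ n) * ‖φfun n x‖ ^ 2)) ∧
    (∀ x, ‖∑' n, s (n + g₁) * (Real.sqrt (μ (n + g₁)) : ℂ) * φfun (n + g₁) x‖ ≤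
        Real.sqrt κ₁ * B *
          Real.sqrt (∑' n, Real.sqrt (μ (n + g₁) / κ₁) * ‖s (n + g₁)‖ ^ 2)) := by
  set A : ℝ := ∑' n, Real.sqrt (μ (n + g₁) / κ₁) * ‖s (n + g₁)‖ ^ 2 with hA
  have hAnn : ∀ n, 0 ≤ Real.sqrt (μ (n + g₁) / κ₁) * ‖s (n + g₁)‖ ^ 2 := fun n => by positivity
  have hA0 : 0 ≤ A := tsum_nonneg hAnn
  have hquarter : Real.sqrt (Real.sqrt κ₁) = κ₁ ^ ((1 : ℝ) / 4) := by
    rw [Real.sqrt_eq_rpow, Real.sqrt_eq_rpow, ← Real.rpow_mul hκ₁.le]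
    norm_num
  have key : ∀ x, ‖∑' n, s (n + g₁) * (Real.sqrt (μ (n + g₁)) : ℂ) * φfun (n + g₁) x‖ ≤
      κ₁ ^ ((1 : ℝ) / 4) * Real.sqrt A *
        Real.sqrt (∑' n, Real.sqrt (μ n) * ‖φfun n x‖ ^ 2) := by
    intro x
    set D : ℝ := ∑' n, Real.sqrt (μ n) * ‖φfun n x‖ ^ 2 with hD
    have hDnn : ∀ n, 0 ≤ Real.sqrt (μ n) * ‖φfun n x‖ ^ 2 := fun n => by positivity
    have hD0 : 0 ≤ D := tsum_nonneg hDnn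
    -- b-sequence
    set b : ℕ → ℝ := fun n => Real.sqrt κ₁ * (Real.sqrt (μ (n + g₁)) * ‖φfun (n + g₁) x‖ ^ 2)
      with hbdef
    have hbtail : Summable fun n => Real.sqrt (μ (n + g₁)) * ‖φfun (n + g₁) x‖ ^ 2 :=
      (summable_nat_add_iff (f := fun n => Real.sqrt (μ n) * ‖φfun n x‖ ^ 2) g₁).2 (hDsum x)
    have hbsum : Summable b := hbtail.mul_left _
    have hbnn : ∀ n, 0 ≤ b n := fun n => by positivity
    have hnorm : ∀ n, ‖s (n + g₁) * (Real.sqrt (μ (n + g₁)) : ℂ) * φfun (n + g₁) x‖ =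
        Real.sqrt (Real.sqrt (μ (n + g₁) / κ₁) * ‖s (n + g₁)‖ ^ 2) * Real.sqrt (b n) := by
      intro n
      have e1 : Real.sqrt (μ (n + g₁) / κ₁) * Real.sqrt κ₁ = Real.sqrt (μ (n + g₁)) := by
        rw [← Real.sqrt_mul (div_nonneg (hpos _) hκ₁.le), div_mul_cancel₀ _ hκ₁.ne']
      have e2 : Real.sqrt (Real.sqrt (μ (n + g₁) / κ₁) * ‖s (n + g₁)‖ ^ 2) * Real.sqrt (b n) =
          Real.sqrt (μ (n + g₁)) * (‖s (n + g₁)‖ * ‖φfun (n + g₁) x‖) := by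
        rw [hbdef, ← Real.sqrt_mul (by positivity)]
        have e3 : Real.sqrt (μ (n + g₁) / κ₁) * ‖s (n + g₁)‖ ^ 2 *
            (Real.sqrt κ₁ * (Real.sqrt (μ (n + g₁)) * ‖φfun (n + g₁) x‖ ^ 2)) =
            (Real.sqrt (μ (n + g₁)) * (‖s (n + g₁)‖ * ‖φfun (n + g₁) x‖)) ^ 2 := by
          calc Real.sqrt (μ (n + g₁) / κ₁) * ‖s (n + g₁)‖ ^ 2 *
              (Real.sqrt κ₁ * (Real.sqrt (μ (n + g₁)) * ‖φfun (n + g₁) x‖ ^ 2))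
              = Real.sqrt (μ (n + g₁) / κ₁) * Real.sqrt κ₁ * Real.sqrt (μ (n + g₁)) *
                (‖s (n + g₁)‖ * ‖φfun (n + g₁) x‖) ^ 2 := by ring
            _ = Real.sqrt (μ (n + g₁)) * Real.sqrt (μ (n + g₁)) *
                (‖s (n + g₁)‖ * ‖φfun (n + g₁) x‖) ^ 2 := by rw [e1]
            _ = (Real.sqrt (μ (n + g₁)) * (‖s (n + g₁)‖ * ‖φfun (n + g₁) x‖)) ^ 2 := by ring
        rw [e3, Real.sqrt_sq (by positivity)]
      rw [e2, norm_mul, norm_mul, Complex.norm_real, Real.norm_eq_abs,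
        abs_of_nonneg (Real.sqrt_nonneg _)]
      ring
    have hns : Summable fun n => ‖s (n + g₁) * (Real.sqrt (μ (n + g₁)) : ℂ) * φfun (n + g₁) x‖ := by
      simp_rw [hnorm]
      exact tsum_cs_summable hAnn hbnn hψsum hbsum
    calc ‖∑' n, s (n + g₁) * (Real.sqrt (μ (n + g₁)) : ℂ) * φfun (n + g₁) x‖
        ≤ ∑' n, ‖s (n + g₁) * (Real.sqrt (μ (n + g₁)) : ℂ) * φfun (n + g₁) x‖ :=
          norm_tsum_le_tsum_norm hns
      _ = ∑' n, Real.sqrt (Real.sqrt (μ (n + g₁) / κ₁) * ‖s (n + g₁)‖ ^ 2) * Real.sqrt (b n) := by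
          simp_rw [hnorm]
      _ ≤ Real.sqrt A * Real.sqrt (∑' n, b n) := tsum_cs hAnn hbnn hψsum hbsum
      _ ≤ Real.sqrt A * Real.sqrt (Real.sqrt κ₁ * D) := by
          gcongr
          rw [hbdef, tsum_mul_left, hD]
          refine mul_le_mul_of_nonneg_left ?_ (Real.sqrt_nonneg _)
          exact hbtail.tsum_le_tsum_of_inj (· + g₁) (add_left_injective g₁)
            (fun c _ => hDnn c) (fun n => le_refl _) (hDsum x)
      _ = κ₁ ^ ((1 : ℝ) / 4) * Real.sqrt A * Real.sqrt D := by
          rw [Real.sqrt_mul (Real.sqrt_nonneg _), hquarter]; ring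
  refine ⟨key, fun x => ?_⟩
  calc ‖∑' n, s (n + g₁) * (Real.sqrt (μ (n + g₁)) : ℂ) * φfun (n + g₁) x‖
      ≤ κ₁ ^ ((1 : ℝ) / 4) * Real.sqrt A *
        Real.sqrt (∑' n, Real.sqrt (μ n) * ‖φfun n x‖ ^ 2) := key x
    _ ≤ κ₁ ^ ((1 : ℝ) / 4) * Real.sqrt A * Real.sqrt (Real.sqrt κ₁ * B ^ 2) := by
        gcongr
        exact hbound x
    _ = Real.sqrt κ₁ * B * Real.sqrt A := by
        rw [Real.sqrt_mul (Real.sqrt_nonneg _), Real.sqrt_sq hB, hquarter]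
        have h4 : κ₁ ^ ((1:ℝ)/4) * κ₁ ^ ((1:ℝ)/4) = Real.sqrt κ₁ := by
          rw [← Real.rpow_add hκ₁, Real.sqrt_eq_rpow]; norm_num
        rw [← h4]; ring
end

section
/- Let U and V be independent nonnegative random variables, where V has density f_V(v) = v^{g-1} e^{-v/κ}/((g-1)! κ^g) on [0,∞) (Gamma with integer shape g and scale κ), and suppose E[e^{U/κ}] < ∞. Then as r → +∞, P(U + V > r) ~ (r/κ)^{g-1} e^{-r/κ}/(g-1)! · E[e^{U/κ}]. -/
open MeasureTheory ProbabilityTheory Real Filter Topology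

section AuxTail
open Set

lemma exp_sum_deriv (g : ℕ) (hg : 1 ≤ g) (s : ℝ) :
    HasDerivAt (fun s : ℝ => -(Real.exp (-s) * ∑ k ∈ Finset.range g, s ^ k / k.factorial))
      (s ^ (g - 1) * Real.exp (-s) / (g - 1).factorial) s := by
  induction g, hg using Nat.le_induction with
  | base =>
    have h : HasDerivAt (fun s : ℝ => -(Real.exp (-s))) (s ^ 0 * Real.exp (-s) / 1) s := by
      simpa using ((hasDerivAt_neg s).exp).fun_neg
    have he : (fun s : ℝ => -(Real.exp (-s))) =
        fun s : ℝ => -(Real.exp (-s) * ∑ k ∈ Finset.range 1, s ^ k / k.factorial) := by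
      funext x; simp [Finset.sum_range_one]
    rw [he] at h; simpa using h
  | succ g hg ih =>
    have hterm : HasDerivAt (fun s : ℝ => Real.exp (-s) * s ^ g / g.factorial)
        ((Real.exp (-s) * (-1) * s ^ g + Real.exp (-s) * (g * s ^ (g - 1))) / g.factorial) s := by
      exact (((hasDerivAt_neg s).exp).mul (hasDerivAt_pow g s)).div_const _
    have h := ih.fun_sub hterm
    have hfun : (fun s : ℝ => -(Real.exp (-s) * ∑ k ∈ Finset.range g, s ^ k / k.factorial) -
        Real.exp (-s) * s ^ g / g.factorial) =
        fun s : ℝ => -(Real.exp (-s) * ∑ k ∈ Finset.range (g + 1), s ^ k / k.factorial) := by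
      funext x; rw [Finset.sum_range_succ]; ring
    rw [hfun] at h
    refine h.congr_deriv ?_
    have hfac : (g.factorial : ℝ) = g * (g - 1).factorial := by
      rw [← Nat.cast_mul, Nat.mul_factorial_pred (by omega)]
    have hpow : s ^ g = s ^ (g - 1) * s := by
      nth_rewrite 1 [← Nat.succ_pred_eq_of_pos hg]
      rw [pow_succ, Nat.pred_eq_sub_one]
    have hg0 : (0:ℝ) < g := by exact_mod_cast hg
    have hfac0 : ((g-1).factorial : ℝ) ≠ 0 := by positivity
    simp only [Nat.add_sub_cancel]
    rw [hfac]
    field_simp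
    ring

lemma gamma_tail_tendsto (g : ℕ) (κ : ℝ) (hκ : 0 < κ) :
    Tendsto (fun t : ℝ => -(Real.exp (-(t/κ)) * ∑ k ∈ Finset.range g, (t/κ) ^ k / k.factorial))
      atTop (𝓝 0) := by
  have hdiv : Tendsto (fun t : ℝ => t / κ) atTop atTop :=
    tendsto_id.atTop_div_const hκ
  have h : Tendsto (fun t : ℝ => Real.exp (-(t/κ)) * ∑ k ∈ Finset.range g, (t/κ) ^ k / k.factorial)
      atTop (𝓝 0) := by
    have : ∀ t : ℝ, Real.exp (-(t/κ)) * ∑ k ∈ Finset.range g, (t/κ) ^ k / k.factorial =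
        ∑ k ∈ Finset.range g, ((t/κ) ^ k * Real.exp (-(t/κ))) / k.factorial := by
      intro t; rw [Finset.mul_sum]; congr 1; funext k; ring
    simp_rw [this]
    have h0 : (0:ℝ) = ∑ k ∈ Finset.range g, 0 := by simp
    rw [h0]
    refine tendsto_finset_sum _ fun k _ => ?_
    have := (tendsto_pow_mul_exp_neg_atTop_nhds_zero k).comp hdiv
    simpa using this.div_const (k.factorial : ℝ)
  simpa using h.neg

lemma gamma_tail_hasDeriv (g : ℕ) (hg : 1 ≤ g) (κ : ℝ) (hκ : 0 < κ) (t : ℝ) :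
    HasDerivAt (fun t : ℝ => -(Real.exp (-(t/κ)) * ∑ k ∈ Finset.range g, (t/κ) ^ k / k.factorial))
      (κ⁻¹ ^ g * t ^ (g - 1) * Real.exp (-(t/κ)) / (g - 1).factorial) t := by
  have hin : HasDerivAt (fun t : ℝ => t / κ) κ⁻¹ t := by
    simpa [div_eq_mul_inv] using (hasDerivAt_id t).div_const κ
  have h := (exp_sum_deriv g hg (t / κ)).comp t hin
  refine h.congr_deriv ?_
  have : κ⁻¹ ^ g = κ⁻¹ ^ (g - 1) * κ⁻¹ := by
    nth_rewrite 1 [← Nat.succ_pred_eq_of_pos hg]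
    rw [pow_succ, Nat.pred_eq_sub_one]
  rw [this, div_pow, div_eq_mul_inv (t ^ (g-1)), ← inv_pow]
  ring

lemma gamma_tail_eq (g : ℕ) (hg : 1 ≤ g) (κ : ℝ) (hκ : 0 < κ) (t : ℝ) (ht : 0 ≤ t) :
    gammaMeasure g κ⁻¹ (Ioi t) =
      ENNReal.ofReal (Real.exp (-(t/κ)) * ∑ k ∈ Finset.range g, (t/κ) ^ k / k.factorial) := by
  set f : ℝ → ℝ := fun x => κ⁻¹ ^ g * x ^ (g - 1) * Real.exp (-(x/κ)) / (g - 1).factorial with hf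
  have hderiv := fun x (_ : x ∈ Ioi t) => gamma_tail_hasDeriv g hg κ hκ x
  have hpos : ∀ x ∈ Ioi t, 0 ≤ f x := fun x _ => by
    have : (0:ℝ) < κ⁻¹ := inv_pos.mpr hκ
    have hx : (0:ℝ) ≤ x := le_trans ht (le_of_lt ‹x ∈ Ioi t›)
    positivity
  have hcont : ContinuousWithinAt
      (fun t : ℝ => -(Real.exp (-(t/κ)) * ∑ k ∈ Finset.range g, (t/κ) ^ k / k.factorial))
      (Ici t) t := by
    apply Continuous.continuousWithinAt
    fun_prop
  have hint : ∫ x in Ioi t, f x =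
      0 - -(Real.exp (-(t/κ)) * ∑ k ∈ Finset.range g, (t/κ) ^ k / k.factorial) :=
    integral_Ioi_of_hasDerivAt_of_nonneg hcont hderiv hpos (gamma_tail_tendsto g κ hκ)
  have hintg : IntegrableOn f (Ioi t) :=
    integrableOn_Ioi_deriv_of_nonneg hcont hderiv hpos (gamma_tail_tendsto g κ hκ)
  have hpdf : ∀ x ∈ Ioi t, gammaPDF g κ⁻¹ x = ENNReal.ofReal (f x) := by
    intro x hx
    have hx0 : (0:ℝ) < x := lt_of_le_of_lt ht hx
    rw [gammaPDF_of_nonneg hx0.le]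
    congr 1
    have h1 : (κ⁻¹ : ℝ) ^ (g : ℝ) = κ⁻¹ ^ g := by rw [rpow_natCast]
    have h2 : x ^ ((g : ℝ) - 1) = x ^ (g - 1 : ℕ) := by
      rw [show ((g:ℝ) - 1) = ((g - 1 : ℕ) : ℝ) by
        rw [Nat.cast_sub hg]; norm_num, rpow_natCast]
    have h3 : Real.Gamma (g : ℝ) = (g - 1).factorial := by
      rw [show ((g:ℝ)) = ((g - 1 : ℕ) : ℝ) + 1 by
        rw [Nat.cast_sub hg]; norm_num, Real.Gamma_nat_eq_factorial]
    have h4 : -(κ⁻¹ * x) = -(x/κ) := by rw [inv_mul_eq_div]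
    rw [h1, h2, h3, h4, hf]
    ring
  rw [gammaMeasure, withDensity_apply _ measurableSet_Ioi,
    setLIntegral_congr_fun measurableSet_Ioi hpdf,
    ← ofReal_integral_eq_lintegral_ofReal hintg
      ((ae_restrict_iff' measurableSet_Ioi).mpr (ae_of_all _ hpos)), hint]
  norm_num

lemma ratio_eq (g : ℕ) (κ : ℝ) (hκ : 0 < κ) (r u : ℝ) (hr : 0 < r) :
    (Real.exp (-((r-u)/κ)) * ∑ k ∈ Finset.range g, ((r-u)/κ)^k / k.factorial) /
      ((r/κ)^(g-1) * Real.exp (-r/κ) / (g-1).factorial) =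
    Real.exp (u/κ) *
      ((∑ k ∈ Finset.range g, ((r-u)/κ)^k / k.factorial) * (g-1).factorial / (r/κ)^(g-1)) := by
  have he : Real.exp (-((r-u)/κ)) = Real.exp (-r/κ) * Real.exp (u/κ) := by
    rw [← Real.exp_add]; congr 1; field_simp; ring
  have h1 : (Real.exp (-r/κ)) ≠ 0 := Real.exp_ne_zero _
  have h2 : ((r/κ)^(g-1) : ℝ) ≠ 0 := by positivity
  have h3 : (((g-1).factorial : ℕ) : ℝ) ≠ 0 := by positivity
  rw [he]
  field_simp

lemma A_bound (g : ℕ) (hg : 1 ≤ g) (κ : ℝ) (hκ : 0 < κ) (r u : ℝ)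
    (hr : κ ≤ r) (hu : 0 ≤ u) (hur : u ≤ r) :
    (∑ k ∈ Finset.range g, ((r-u)/κ)^k / k.factorial) * (g-1).factorial / (r/κ)^(g-1)
      ≤ g.factorial := by
  have hrκ : (1:ℝ) ≤ r / κ := (one_le_div hκ).mpr hr
  have hc : (1:ℝ) ≤ (r/κ)^(g-1) := one_le_pow₀ hrκ
  have hc0 : (0:ℝ) < (r/κ)^(g-1) := lt_of_lt_of_le one_pos hc
  have hsum : (∑ k ∈ Finset.range g, ((r-u)/κ)^k / k.factorial) ≤ g * (r/κ)^(g-1) := by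
    calc (∑ k ∈ Finset.range g, ((r-u)/κ)^k / k.factorial)
        ≤ ∑ k ∈ Finset.range g, (r/κ)^(g-1) := by
          refine Finset.sum_le_sum fun k hk => ?_
          have hru : (0:ℝ) ≤ (r-u)/κ := div_nonneg (by linarith) hκ.le
          have hsub : (r-u)/κ ≤ r/κ := by gcongr <;> linarith
          have h1 : ((r-u)/κ)^k ≤ (r/κ)^k := pow_le_pow_left₀ hru hsub k
          have h2 : (r/κ)^k ≤ (r/κ)^(g-1) :=
            pow_le_pow_right₀ hrκ (by simp at hk; omega)
          have h3 : ((r-u)/κ)^k / k.factorial ≤ ((r-u)/κ)^k := by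
            apply div_le_self (by positivity)

            exact_mod_cast Nat.one_le_iff_ne_zero.mpr k.factorial_ne_zero
          linarith
      _ = g * (r/κ)^(g-1) := by rw [Finset.sum_const, Finset.card_range]; ring
  rw [div_le_iff₀ hc0]
  have hgfac : (g.factorial : ℝ) = g * (g-1).factorial := by
    rw [← Nat.cast_mul, Nat.mul_factorial_pred (by omega)]
  rw [hgfac]
  have hfac0 : (0:ℝ) ≤ (g-1).factorial := by positivity
  nlinarith [hsum, hc0, hfac0]


lemma A_tendsto (g : ℕ) (hg : 1 ≤ g) (κ : ℝ) (hκ : 0 < κ) (u : ℝ) :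
    Tendsto (fun r : ℝ =>
      (∑ k ∈ Finset.range g, ((r-u)/κ)^k / k.factorial) * (g-1).factorial / (r/κ)^(g-1))
      atTop (𝓝 1) := by
  have hrw : ∀ r : ℝ, (∑ k ∈ Finset.range g, ((r-u)/κ)^k / k.factorial) * (g-1).factorial
        / (r/κ)^(g-1) =
      ∑ k ∈ Finset.range g, ((r-u)/κ)^k / k.factorial * (g-1).factorial / (r/κ)^(g-1) := by
    intro r; rw [Finset.sum_mul, Finset.sum_div]
  simp_rw [hrw]
  have hsum : (1:ℝ) = ∑ k ∈ Finset.range g,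
      (1:ℝ)^k * (if g - 1 - k = 0 then 1 else 0) * ((g-1).factorial / k.factorial) := by
    rw [Finset.sum_eq_single (g-1)]
    · rw [one_pow, if_pos (by omega), one_mul,
        div_self (by positivity : ((g-1).factorial:ℝ) ≠ 0), mul_one]
    · intro k hk hne
      simp only [Finset.mem_range] at hk
      rw [if_neg (by omega)]
      ring
    · intro h; exact absurd (Finset.mem_range.mpr (by omega)) h
  rw [hsum]
  refine tendsto_finset_sum _ fun k hk => ?_
  simp only [Finset.mem_range] at hk
  -- each term
  have h1 : Tendsto (fun r : ℝ => ((r - u)/r)^k) atTop (𝓝 ((1:ℝ)^k)) := by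
    have hu0 : Tendsto (fun r : ℝ => u / r) atTop (𝓝 0) :=
      tendsto_const_nhds.div_atTop tendsto_id
    have h := ((tendsto_const_nhds (α := ℝ) (x := (1:ℝ))).sub hu0).pow k
    rw [sub_zero] at h
    refine h.congr' ?_
    filter_upwards [eventually_gt_atTop (0:ℝ)] with r hr
    rw [sub_div, div_self hr.ne']
  have h2 : Tendsto (fun r : ℝ => (κ / r)^(g - 1 - k)) atTop
      (𝓝 (if g - 1 - k = 0 then 1 else 0)) := by
    have hκ0 : Tendsto (fun r : ℝ => κ / r) atTop (𝓝 0) :=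
      tendsto_const_nhds.div_atTop tendsto_id
    have := hκ0.pow (g - 1 - k)
    rwa [zero_pow_eq] at this
  have h := (h1.mul h2).mul_const (((g-1).factorial : ℝ) / k.factorial)
  refine h.congr' ?_
  filter_upwards [eventually_gt_atTop (0:ℝ)] with r hr
  have hkk : k + (g - 1 - k) = g - 1 := by omega
  have hrp : r ^ (g-1) = r ^ k * r ^ (g - 1 - k) := by rw [← pow_add, hkk]
  have hκp : κ ^ (g-1) = κ ^ k * κ ^ (g - 1 - k) := by rw [← pow_add, hkk]
  have hf : ((k.factorial : ℕ):ℝ) ≠ 0 := by positivity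
  rw [div_pow, div_pow, div_pow, div_pow, hrp, hκp]
  field_simp

lemma sum_tail_decomp {Ω : Type*} [MeasurableSpace Ω] (P : Measure Ω) [IsProbabilityMeasure P]
    (U V : Ω → ℝ) (hUm : Measurable U) (hVm : Measurable V)
    (hindep : IndepFun U V P) (r : ℝ) :
    P {ω | U ω + V ω > r} = ∫⁻ ω, (P.map V) (Ioi (r - U ω)) ∂P := by
  have hmap := (indepFun_iff_map_prod_eq_prod_map_map hUm.aemeasurable hVm.aemeasurable).mp hindep
  have hs : MeasurableSet {p : ℝ × ℝ | r < p.1 + p.2} :=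
    measurableSet_lt measurable_const (measurable_fst.add measurable_snd)
  have hset : {ω | U ω + V ω > r} = (fun ω => (U ω, V ω)) ⁻¹' {p : ℝ × ℝ | r < p.1 + p.2} := rfl
  haveI : IsProbabilityMeasure (P.map V) := Measure.isProbabilityMeasure_map hVm.aemeasurable
  rw [hset, ← Measure.map_apply (hUm.prodMk hVm) hs, hmap, Measure.prod_apply hs]
  have hpre : ∀ u : ℝ, (Prod.mk u ⁻¹' {p : ℝ × ℝ | r < p.1 + p.2}) = Ioi (r - u) := by
    intro u; ext v; simp [mem_Ioi, sub_lt_iff_lt_add']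
  simp_rw [hpre]
  have hanti : Antitone (fun t : ℝ => (P.map V) (Ioi t)) :=
    fun a b hab => measure_mono (Ioi_subset_Ioi hab)
  exact lintegral_map (hanti.measurable.comp (measurable_const.sub measurable_id)) hUm


end AuxTail

open Set in
/-- Key tail asymptotic: if `U, V` are independent nonnegative random variables, `V` is
Gamma-distributed with integer shape `g ≥ 1` and scale `κ` (i.e. rate `1/κ`), and
`E[e^{U/κ}] < ∞`, then `P(U + V > r) ~ (r/κ)^{g-1} e^{-r/κ}/(g-1)! · E[e^{U/κ}]`
as `r → ∞`. -/
theorem gamma_plus_independent_tail_asymptotics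
    {Ω : Type*} [MeasurableSpace Ω] (P : Measure Ω) [IsProbabilityMeasure P]
    (U V : Ω → ℝ) (hUm : Measurable U) (hVm : Measurable V)
    (hU0 : ∀ ω, 0 ≤ U ω) (hV0 : ∀ ω, 0 ≤ V ω)
    (hindep : IndepFun U V P)
    (g : ℕ) (hg : 1 ≤ g) (κ : ℝ) (hκ : 0 < κ)
    (hV : P.map V = gammaMeasure g κ⁻¹)
    (hexp : Integrable (fun ω => Real.exp (U ω / κ)) P) :
    Tendsto (fun r : ℝ =>
        (P {ω | U ω + V ω > r}).toReal /
          ((r / κ) ^ (g - 1) * Real.exp (-r / κ) / (Nat.factorial (g - 1))))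
      atTop (𝓝 (∫ ω, Real.exp (U ω / κ) ∂P)) := by
  haveI hPV : IsProbabilityMeasure (P.map V) := Measure.isProbabilityMeasure_map hVm.aemeasurable
  haveI hν : IsProbabilityMeasure (gammaMeasure g κ⁻¹) := hV ▸ hPV
  set ν := gammaMeasure (g : ℝ) κ⁻¹ with hνdef
  set τ : ℝ → ℝ := fun t => (ν (Ioi t)).toReal with hτdef
  set D : ℝ → ℝ := fun r => (r / κ) ^ (g - 1) * Real.exp (-r / κ) / (Nat.factorial (g - 1))
    with hD
  have hτanti : Antitone τ := fun a b hab =>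
    ENNReal.toReal_mono (measure_ne_top _ _) (measure_mono (Ioi_subset_Ioi hab))
  have hτm : Measurable τ := hτanti.measurable
  have hτ0 : ∀ t, 0 ≤ τ t := fun t => ENNReal.toReal_nonneg
  have hτ1 : ∀ t, τ t ≤ 1 := fun t => by
    rw [hτdef]
    exact ENNReal.toReal_le_of_le_ofReal zero_le_one (by simpa using prob_le_one (μ := ν))
  have hτeq : ∀ t, 0 ≤ t →
      τ t = Real.exp (-(t/κ)) * ∑ k ∈ Finset.range g, (t/κ)^k / k.factorial := by
    intro t ht
    have hd : (0:ℝ) ≤ t/κ := div_nonneg ht hκ.le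
    rw [hτdef]
    simp only [hνdef]
    rw [gamma_tail_eq g hg κ hκ t ht, ENNReal.toReal_ofReal (by positivity)]
  have hdec : ∀ r : ℝ, (P {ω | U ω + V ω > r}).toReal = ∫ ω, τ (r - U ω) ∂P := by
    intro r
    rw [sum_tail_decomp P U V hUm hVm hindep r, hV]
    have hanti : Antitone (fun t : ℝ => ν (Ioi t)) :=
      fun a b hab => measure_mono (Ioi_subset_Ioi hab)
    have hm : Measurable fun ω => ν (Ioi (r - U ω)) :=
      hanti.measurable.comp (measurable_const.sub hUm)
    exact (integral_toReal hm.aemeasurable (ae_of_all _ fun ω => measure_lt_top _ _)).symm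
  have key : Tendsto (fun r => ∫ ω, τ (r - U ω) / D r ∂P) atTop
      (𝓝 (∫ ω, Real.exp (U ω / κ) ∂P)) := by
    apply tendsto_integral_filter_of_dominated_convergence
      (bound := fun ω => (g.factorial : ℝ) * Real.exp (U ω / κ))
    · filter_upwards with r
      exact ((hτm.comp (measurable_const.sub hUm)).div_const _).aestronglyMeasurable
    · filter_upwards [eventually_ge_atTop (max κ 1)] with r hr
      have hrκ : κ ≤ r := le_trans (le_max_left _ _) hr
      have hr1 : (1:ℝ) ≤ r := le_trans (le_max_right _ _) hr
      have hr0 : (0:ℝ) < r := lt_of_lt_of_le one_pos hr1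
      have hD0 : 0 < D r := by rw [hD]; positivity
      refine ae_of_all _ fun ω => ?_
      have hu0 : 0 ≤ U ω := hU0 ω
      set u := U ω with hu
      rw [Real.norm_eq_abs, abs_of_nonneg (div_nonneg (hτ0 _) hD0.le)]
      by_cases hur : u ≤ r
      · rw [hτeq _ (by linarith)]
        simp only [hD]
        rw [ratio_eq g κ hκ r u hr0]
        have hA := A_bound g hg κ hκ r u hrκ hu0 hur
        have hep := Real.exp_pos (u/κ)
        calc Real.exp (u/κ) *
              ((∑ k ∈ Finset.range g, ((r-u)/κ)^k / k.factorial) * (g-1).factorial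
                / (r/κ)^(g-1))
            ≤ Real.exp (u/κ) * g.factorial := by
              exact mul_le_mul_of_nonneg_left hA hep.le
          _ = g.factorial * Real.exp (u/κ) := by ring
      · push_neg at hur
        have h1 : (1:ℝ) ≤ (r/κ)^(g-1) := one_le_pow₀ ((one_le_div hκ).mpr hrκ)
        have hDeq : 1 / D r = (g-1).factorial * Real.exp (r/κ) / (r/κ)^(g-1) := by
          rw [hD]
          simp only
          rw [show (-r/κ) = -(r/κ) by ring, Real.exp_neg]
          have he := Real.exp_pos (r/κ)
          field_simp
        have hfg : ((g-1).factorial : ℝ) ≤ g.factorial := by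
          exact_mod_cast Nat.factorial_le (by omega)
        calc τ (r - u) / D r ≤ 1 / D r := by gcongr; exact hτ1 _
          _ = (g-1).factorial * Real.exp (r/κ) / (r/κ)^(g-1) := hDeq
          _ ≤ (g-1).factorial * Real.exp (r/κ) := by
              apply div_le_self (by positivity) h1
          _ ≤ g.factorial * Real.exp (u/κ) := by
              apply mul_le_mul hfg (Real.exp_le_exp.mpr (by gcongr))
                (Real.exp_pos _).le (by positivity)
    · exact hexp.const_mul _
    · refine ae_of_all _ fun ω => ?_
      have hu0 : 0 ≤ U ω := hU0 ω
      set u := U ω with hu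
      have hA := A_tendsto g hg κ hκ u
      have h := (tendsto_const_nhds (x := Real.exp (u/κ))).mul hA
      rw [mul_one] at h
      refine h.congr' ?_
      filter_upwards [eventually_ge_atTop (max u 1)] with r hr
      have hur : u ≤ r := le_trans (le_max_left _ _) hr
      have hr0 : (0:ℝ) < r := lt_of_lt_of_le one_pos (le_trans (le_max_right _ _) hr)
      rw [hτeq _ (by linarith)]
      simp only [hD]
      exact (ratio_eq g κ hκ r u hr0).symm
  have hfun : (fun r : ℝ => (P {ω | U ω + V ω > r}).toReal /
      ((r / κ) ^ (g - 1) * Real.exp (-r / κ) / (Nat.factorial (g - 1)))) =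
      fun r => ∫ ω, τ (r - U ω) / D r ∂P := by
    funext r
    rw [hdec r]
    simp only [hD]
    exact (integral_div _ _).symm
  rw [hfun]
  exact key
end
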